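/- Let P₀ be a Borel probability measure on ℝ^d with finite second moment that is absolutely continuous with respect to Lebesgue measure, and let C ∈ ℝ^{d×d} be symmetric with λ_max(C) ≠ 0. Then inf{ γ ≥ 0 : E_{P₀}[φ(γ, w)] > −∞ } = max{ λ_max(C), 0 }, which in particular is finite. -/

import Mathlib

open Matrix MeasureTheory
open scoped ENNReal

/-- The nonnegative part of an extended real, as an extended nonnegative real. -/
noncomputable def erealToENNReal (x : EReal) : ℝ≥0∞ :=
  if x = ⊤ then ⊤ else ENNReal.ofReal x.toReal

/-- Expectation of an extended-real-valued function, interpreted in the extended reals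
as (integral of positive part) minus (integral of negative part). -/
noncomputable def eexpE {α : Type*} [MeasurableSpace α] (P : Measure α) (g : α → EReal) :
    EReal :=
  ((∫⁻ w, erealToENNReal (g w) ∂P : ℝ≥0∞) : EReal)
    - ((∫⁻ w, erealToENNReal (-(g w)) ∂P : ℝ≥0∞) : EReal)

/-- Squared type-2 Wasserstein distance between Borel measures on `ℝ^d`:
`W₂(P₁,P₂)² = inf_{π ∈ Π(P₁,P₂)} ∫ ‖z₁ − z₂‖² dπ`. -/
noncomputable def W2sq {d : ℕ} (P₁ P₂ : Measure (Fin d → ℝ)) : ℝ≥0∞ :=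
  ⨅ (π : Measure ((Fin d → ℝ) × (Fin d → ℝ))) (_ : π.map Prod.fst = P₁)
    (_ : π.map Prod.snd = P₂), ∫⁻ z, ENNReal.ofReal (∑ i, (z.1 i - z.2 i) ^ 2) ∂π

/-- The ambiguity set: Borel probability measures on `ℝ^d` with finite second moment within
type-2 Wasserstein distance `r` of the nominal distribution `P₀`. -/
def ambiguitySet {d : ℕ} (P₀ : Measure (Fin d → ℝ)) (r : ℝ) :
    Set (Measure (Fin d → ℝ)) :=
  {P | IsProbabilityMeasure P ∧ Integrable (fun w => ∑ i, (w i) ^ 2) P ∧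
    W2sq P P₀ ≤ ENNReal.ofReal (r ^ 2)}

/-- The largest eigenvalue of a (symmetric) real matrix. -/
noncomputable def lambdaMax {d : ℕ} (C : Matrix (Fin d) (Fin d) ℝ) : ℝ :=
  sSup {t : ℝ | ∃ v : Fin d → ℝ, v ≠ 0 ∧ C.mulVec v = t • v}

/-- `φ(γ, w) := inf_z { γ‖z − w‖² − f(z) }`, valued in `ℝ ∪ {−∞} ⊆ EReal`. -/
noncomputable def phiDual {d : ℕ} (f : (Fin d → ℝ) → ℝ) (γ : ℝ) (w : Fin d → ℝ) : EReal :=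
  ⨅ z : Fin d → ℝ, ((γ * ∑ i, (z i - w i) ^ 2 - f z : ℝ) : EReal)

/-! ### Auxiliary lemmas -/

lemma bddAbove_eig {d : ℕ} (C : Matrix (Fin d) (Fin d) ℝ) :
    BddAbove {t : ℝ | ∃ v : Fin d → ℝ, v ≠ 0 ∧ C.mulVec v = t • v} := by
  refine ⟨∑ i, ∑ j, |C i j|, ?_⟩
  rintro t ⟨v, hv, hev⟩
  obtain ⟨j0, hj0⟩ := Function.ne_iff.mp hv
  obtain ⟨i, -, hi⟩ := Finset.exists_max_image Finset.univ (fun k => |v k|)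
    ⟨j0, Finset.mem_univ _⟩
  have hvi : 0 < |v i| := lt_of_lt_of_le (abs_pos.mpr hj0) (hi j0 (Finset.mem_univ _))
  have h1 : t * v i = ∑ j, C i j * v j := by
    have := congr_fun hev i
    simp [Matrix.mulVec, dotProduct] at this
    simpa using this.symm
  have h2 : |t| * |v i| ≤ (∑ j, |C i j|) * |v i| := by
    rw [← abs_mul, h1]
    calc |∑ j, C i j * v j| ≤ ∑ j, |C i j * v j| := Finset.abs_sum_le_sum_abs _ _
      _ ≤ ∑ j, |C i j| * |v i| := by
          refine Finset.sum_le_sum fun j _ => ?_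
          rw [abs_mul]
          exact mul_le_mul_of_nonneg_left (hi j (Finset.mem_univ _)) (abs_nonneg _)
      _ = (∑ j, |C i j|) * |v i| := by rw [Finset.sum_mul]
  have ht : |t| ≤ ∑ j, |C i j| := le_of_mul_le_mul_right h2 hvi
  calc t ≤ |t| := le_abs_self t
    _ ≤ ∑ j, |C i j| := ht
    _ ≤ ∑ i, ∑ j, |C i j| := Finset.single_le_sum (f := fun k => ∑ j, |C k j|)
        (fun k _ => Finset.sum_nonneg fun j _ => abs_nonneg _) (Finset.mem_univ i)

lemma isHermitian_of_isSymm {d : ℕ} {C : Matrix (Fin d) (Fin d) ℝ} (hC : C.IsSymm) :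
    C.IsHermitian := by
  rw [Matrix.IsHermitian, Matrix.conjTranspose_eq_transpose_of_trivial]
  exact hC

lemma eig_nonempty {d : ℕ} (hd : 0 < d) {C : Matrix (Fin d) (Fin d) ℝ} (hC : C.IsSymm) :
    {t : ℝ | ∃ v : Fin d → ℝ, v ≠ 0 ∧ C.mulVec v = t • v}.Nonempty := by
  have hH := isHermitian_of_isSymm hC
  refine ⟨hH.eigenvalues ⟨0, hd⟩, ⇑(hH.eigenvectorBasis ⟨0, hd⟩), ?_, hH.mulVec_eigenvectorBasis _⟩
  rw [ne_eq, WithLp.ofLp_eq_zero]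
  exact hH.eigenvectorBasis.orthonormal.ne_zero _

lemma quad_le_lambdaMax {d : ℕ} {C : Matrix (Fin d) (Fin d) ℝ} (hC : C.IsSymm)
    (z : Fin d → ℝ) : z ⬝ᵥ C.mulVec z ≤ lambdaMax C * ∑ i, z i ^ 2 := by
  have hH := isHermitian_of_isSymm hC
  set b := hH.eigenvectorBasis with hb
  set μ := hH.eigenvalues with hμ
  set zE : EuclideanSpace ℝ (Fin d) := WithLp.toLp 2 z with hzE
  have hinner : ∀ x y : EuclideanSpace ℝ (Fin d),
      (inner ℝ x y : ℝ) = (x : Fin d → ℝ) ⬝ᵥ (y : Fin d → ℝ) := by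
    intro x y
    simp [PiLp.inner_apply, dotProduct]
    exact Finset.sum_congr rfl fun i _ => mul_comm _ _
  have hrepr : ∀ i, (inner ℝ (b i) zE : ℝ) = (⇑(b i)) ⬝ᵥ z := fun i => hinner _ _
  have h1 : z ⬝ᵥ C.mulVec z = ∑ i, (inner ℝ zE (b i) : ℝ) *
      (inner ℝ (b i) (WithLp.toLp 2 (C.mulVec z)) : ℝ) := by
    rw [OrthonormalBasis.sum_inner_mul_inner, hinner]
  have h2 : ∀ i, (inner ℝ (b i) (WithLp.toLp 2 (C.mulVec z)) : ℝ)
      = μ i * ((⇑(b i)) ⬝ᵥ z) := by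
    intro i
    rw [hinner]
    show (⇑(b i)) ⬝ᵥ (C.mulVec z) = _
    rw [Matrix.dotProduct_mulVec, ← Matrix.mulVec_transpose, hC.eq,
      hH.mulVec_eigenvectorBasis, smul_dotProduct]
    rw [smul_eq_mul]
  have h3 : ∀ i, (inner ℝ zE (b i) : ℝ) = (⇑(b i)) ⬝ᵥ z := by
    intro i; rw [hinner]; exact dotProduct_comm _ _
  have h4 : ∑ i, ((⇑(b i)) ⬝ᵥ z) ^ 2 = ∑ i, z i ^ 2 := by
    have := b.sum_inner_mul_inner zE zE
    have hz : (inner ℝ zE zE : ℝ) = ∑ i, z i ^ 2 := by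
      rw [hinner]; simp [dotProduct, sq, hzE]
    rw [hz] at this
    rw [← this]
    refine Finset.sum_congr rfl fun i _ => ?_
    rw [h3, hrepr, sq]
  have hμle : ∀ i, μ i ≤ lambdaMax C := by
    intro i
    exact le_csSup (bddAbove_eig C)
      ⟨⇑(b i), (by rw [ne_eq, WithLp.ofLp_eq_zero]; exact b.orthonormal.ne_zero i), hH.mulVec_eigenvectorBasis i⟩
  calc z ⬝ᵥ C.mulVec z = ∑ i, μ i * ((⇑(b i)) ⬝ᵥ z) ^ 2 := by
        rw [h1]
        refine Finset.sum_congr rfl fun i _ => ?_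
        rw [h2, h3, sq]; ring
    _ ≤ ∑ i, lambdaMax C * ((⇑(b i)) ⬝ᵥ z) ^ 2 :=
        Finset.sum_le_sum fun i _ => mul_le_mul_of_nonneg_right (hμle i) (sq_nonneg _)
    _ = lambdaMax C * ∑ i, z i ^ 2 := by rw [← Finset.mul_sum, h4]

lemma quad_unbounded {a b c r : ℝ} (ha : 0 < a) : ∃ t : ℝ, -a * t ^ 2 + b * t + c < r := by
  obtain ⟨t, h1, h2⟩ : ∃ t : ℝ, 1 ≤ t ∧ |b| + |c| + |r| + 1 ≤ a * t := by
    refine ⟨(|b| + |c| + |r| + 1) / a + 1, ?_, ?_⟩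
    · have : 0 ≤ (|b| + |c| + |r| + 1) / a := by positivity
      linarith
    · rw [mul_add, mul_one, mul_div_cancel₀ _ ha.ne']
      nlinarith [abs_nonneg b, abs_nonneg c, abs_nonneg r]
  refine ⟨t, ?_⟩
  nlinarith [le_abs_self b, le_abs_self c, neg_abs_le r, le_abs_self r, abs_nonneg b,
    abs_nonneg c, abs_nonneg r, mul_le_mul_of_nonneg_left h2 (le_trans zero_le_one h1)]

lemma phi_eq_bot {d : ℕ} {C : Matrix (Fin d) (Fin d) ℝ} {γ lam : ℝ} (hγ : γ < lam)
    {v : Fin d → ℝ} (hv : v ≠ 0) (hev : C.mulVec v = lam • v) (w : Fin d → ℝ) :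
    phiDual (fun z => z ⬝ᵥ C.mulVec z) γ w = ⊥ := by
  rw [phiDual, iInf_eq_bot]
  intro e he
  have key : ∀ r : ℝ, ∃ z : Fin d → ℝ,
      γ * ∑ i, (z i - w i) ^ 2 - z ⬝ᵥ C.mulVec z < r := by
    intro r
    set V := ∑ i, v i ^ 2 with hV
    set s := ∑ i, v i * w i with hs
    set W := ∑ i, w i ^ 2 with hW
    have hVpos : 0 < V := by
      obtain ⟨j, hj⟩ := Function.ne_iff.mp hv
      exact Finset.sum_pos' (fun i _ => sq_nonneg _)
        ⟨j, Finset.mem_univ _, lt_of_le_of_ne (sq_nonneg _) (Ne.symm (pow_ne_zero 2 hj))⟩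
    have hsum : ∀ t : ℝ, ∑ i, (t * v i - w i) ^ 2 = t ^ 2 * V - 2 * t * s + W := by
      intro t
      have h : ∀ i : Fin d, (t * v i - w i) ^ 2
          = t ^ 2 * v i ^ 2 - 2 * t * (v i * w i) + w i ^ 2 := fun i => by ring
      simp_rw [h]
      rw [Finset.sum_add_distrib, Finset.sum_sub_distrib, ← Finset.mul_sum, ← Finset.mul_sum]
    have hvv : v ⬝ᵥ v = V := by simp [dotProduct, hV, sq]
    have hquad : ∀ t : ℝ, (t • v) ⬝ᵥ C.mulVec (t • v) = t ^ 2 * (lam * V) := by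
      intro t
      rw [Matrix.mulVec_smul, hev]
      simp only [smul_dotProduct, dotProduct_smul, smul_eq_mul, hvv]
      ring
    obtain ⟨t, htlt⟩ := quad_unbounded (a := (lam - γ) * V) (b := -2 * γ * s) (c := γ * W)
      (r := r) (by nlinarith)
    refine ⟨t • v, ?_⟩
    have hz : ∀ i, (t • v) i = t * v i := fun i => rfl
    simp_rw [hz]
    rw [hsum, hquad]
    nlinarith [htlt]
  induction e using EReal.rec with
  | bot => exact absurd he (lt_irrefl _)
  | coe r =>
      obtain ⟨z, hz⟩ := key r
      exact ⟨z, by exact_mod_cast hz⟩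
  | top =>
      obtain ⟨z, hz⟩ := key 0
      exact ⟨z, EReal.coe_lt_top _⟩

lemma eexpE_eq_bot {α : Type*} [MeasurableSpace α] (P : Measure α) [IsProbabilityMeasure P]
    {g : α → EReal} (hg : ∀ w, g w = ⊥) : eexpE P g = ⊥ := by
  have h1 : ∀ w, erealToENNReal (g w) = 0 := by
    intro w; rw [hg w]; simp [erealToENNReal]
  have h2 : ∀ w, erealToENNReal (-(g w)) = ⊤ := by
    intro w; rw [hg w]; simp [erealToENNReal]
  rw [eexpE]
  rw [lintegral_congr h1, lintegral_congr h2, lintegral_zero, lintegral_const]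
  simp [EReal.sub_top]

lemma erealToENNReal_le_ofReal {x : EReal} {r : ℝ} (h : x ≤ (r : EReal)) :
    erealToENNReal x ≤ ENNReal.ofReal r := by
  induction x using EReal.rec with
  | bot => simp [erealToENNReal]
  | coe y =>
      have : y ≤ r := by exact_mod_cast h
      simp only [erealToENNReal, if_neg (by simp : ((y:ℝ) : EReal) ≠ ⊤)]
      simpa using ENNReal.ofReal_le_ofReal this
  | top => exact absurd ((EReal.coe_lt_top r).trans_le h) (lt_irrefl _)

lemma sub_ne_bot_of_ne_top {x y : ℝ≥0∞} (hy : y ≠ ⊤) :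
    ((x : EReal) - (y : EReal)) ≠ ⊥ := by
  induction y using ENNReal.recTopCoe with
  | top => exact absurd rfl hy
  | coe y =>
    rcases eq_or_ne x ⊤ with hx | hx
    · rw [hx]
      simp only [EReal.coe_ennreal_top, EReal.coe_nnreal_eq_coe_real]
      rw [EReal.top_sub_coe]
      simp
    · induction x using ENNReal.recTopCoe with
      | top => exact absurd rfl hx
      | coe x =>
        simp only [EReal.coe_nnreal_eq_coe_real]
        rw [← EReal.coe_sub]
        exact EReal.coe_ne_bot _

lemma phi_ge {d : ℕ} {C : Matrix (Fin d) (Fin d) ℝ} (hC : C.IsSymm) {γ : ℝ}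
    (hγ : lambdaMax C < γ) (w : Fin d → ℝ) :
    ((-((γ ^ 2 / (γ - lambdaMax C) - γ) * ∑ i, w i ^ 2) : ℝ) : EReal)
      ≤ phiDual (fun z => z ⬝ᵥ C.mulVec z) γ w := by
  rw [phiDual]
  refine le_iInf fun z => ?_
  rw [EReal.coe_le_coe_iff]
  set lam := lambdaMax C with hlamdef
  have ha : 0 < γ - lam := sub_pos.mpr hγ
  set q := γ ^ 2 / (γ - lam) with hqdef
  have hq0 : 0 ≤ q := div_nonneg (sq_nonneg _) ha.le
  have haq : (γ - lam) * q = γ ^ 2 := by rw [hqdef]; field_simp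
  set V := ∑ i, z i ^ 2 with hVdef
  set W := ∑ i, w i ^ 2 with hWdef
  set s := ∑ i, z i * w i with hsdef
  have hV : 0 ≤ V := Finset.sum_nonneg fun i _ => sq_nonneg _
  have hW : 0 ≤ W := Finset.sum_nonneg fun i _ => sq_nonneg _
  have hCS : s ^ 2 ≤ V * W := Finset.sum_mul_sq_le_sq_mul_sq _ _ _
  have hsum : ∑ i, (z i - w i) ^ 2 = V - 2 * s + W := by
    rw [hVdef, hWdef, hsdef]
    have h : ∀ i : Fin d, (z i - w i) ^ 2 = z i ^ 2 - 2 * (z i * w i) + w i ^ 2 :=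
      fun i => by ring
    simp_rw [h]
    rw [Finset.sum_add_distrib, Finset.sum_sub_distrib, ← Finset.mul_sum]
  have hquad : z ⬝ᵥ C.mulVec z ≤ lam * V := quad_le_lambdaMax hC z
  have hX : 0 ≤ (γ - lam) * V + q * W := add_nonneg (mul_nonneg ha.le hV) (mul_nonneg hq0 hW)
  have hsq : (2 * γ * s) ^ 2 ≤ ((γ - lam) * V + q * W) ^ 2 := by
    nlinarith [sq_nonneg ((γ - lam) * V - q * W), mul_nonneg (sq_nonneg γ) (sub_nonneg.mpr hCS),
      mul_nonneg hV hW]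
  have key : 0 ≤ (γ - lam) * V - 2 * γ * s + q * W := by nlinarith [hX, hsq]
  rw [hsum]
  nlinarith [key, hquad]

/-- under the same assumptions as Statement 4,
`inf{ γ ≥ 0 : E_{P₀}[φ(γ,·)] > −∞ } = max{λ_max(C), 0}`, which in particular is finite. -/
theorem stmt5 {d : ℕ} (hd : 0 < d)
    (P₀ : Measure (Fin d → ℝ)) [IsProbabilityMeasure P₀]
    (hmom : Integrable (fun w => ∑ i, (w i) ^ 2) P₀)
    (hac : P₀ ≪ (volume : Measure (Fin d → ℝ)))
    (C : Matrix (Fin d) (Fin d) ℝ) (hC : C.IsSymm) (hlmax : lambdaMax C ≠ 0) :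
    sInf {γ : ℝ | 0 ≤ γ ∧ eexpE P₀ (phiDual (fun z => z ⬝ᵥ C.mulVec z) γ) ≠ ⊥}
      = max (lambdaMax C) 0 := by
  set m := max (lambdaMax C) 0 with hm
  set S := {γ : ℝ | 0 ≤ γ ∧ eexpE P₀ (phiDual (fun z => z ⬝ᵥ C.mulVec z) γ) ≠ ⊥} with hS
  -- every element of S is ≥ m
  have hlb : ∀ γ ∈ S, m ≤ γ := by
    rintro γ ⟨hγ0, hne⟩
    refine max_le ?_ hγ0
    by_contra h
    push_neg at h
    have h' : γ < sSup {t : ℝ | ∃ v : Fin d → ℝ, v ≠ 0 ∧ C.mulVec v = t • v} := h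
    obtain ⟨lam, hlammem, hγlam⟩ := exists_lt_of_lt_csSup (eig_nonempty hd hC) h'
    obtain ⟨v, hv, hev⟩ := hlammem
    exact hne (eexpE_eq_bot P₀ (phi_eq_bot hγlam hv hev))
  -- every γ > m is in S
  have hmem : ∀ γ : ℝ, m < γ → γ ∈ S := by
    intro γ hγ
    have hγ0 : 0 ≤ γ := ((le_max_right _ _).trans_lt hγ).le
    have hγl : lambdaMax C < γ := (le_max_left _ _).trans_lt hγ
    set K := γ ^ 2 / (γ - lambdaMax C) - γ with hK
    set K' := max K 0 with hK'
    have hK'0 : 0 ≤ K' := le_max_right _ _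
    refine ⟨hγ0, ?_⟩
    have hbound : ∀ w : Fin d → ℝ,
        erealToENNReal (-(phiDual (fun z => z ⬝ᵥ C.mulVec z) γ w))
          ≤ ENNReal.ofReal (K' * ∑ i, w i ^ 2) := by
      intro w
      refine erealToENNReal_le_ofReal ?_
      have h1 := phi_ge hC hγl w
      have hWn : 0 ≤ ∑ i, w i ^ 2 := Finset.sum_nonneg fun i _ => sq_nonneg _
      have h2 : (-(K' * ∑ i, w i ^ 2) : ℝ) ≤ (-(K * ∑ i, w i ^ 2) : ℝ) := by
        have : K * ∑ i, w i ^ 2 ≤ K' * ∑ i, w i ^ 2 :=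
          mul_le_mul_of_nonneg_right (le_max_left _ _) hWn
        linarith
    -- -(phi) ≤ K' * ∑ w i ^ 2
      have h3 : ((-(K' * ∑ i, w i ^ 2) : ℝ) : EReal)
          ≤ phiDual (fun z => z ⬝ᵥ C.mulVec z) γ w :=
        le_trans (by exact_mod_cast h2) h1
      calc -(phiDual (fun z => z ⬝ᵥ C.mulVec z) γ w)
          ≤ -(((-(K' * ∑ i, w i ^ 2) : ℝ) : EReal)) := EReal.neg_le_neg_iff.mpr h3
        _ = ((K' * ∑ i, w i ^ 2 : ℝ) : EReal) := by
            rw [← EReal.coe_neg, neg_neg]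
    have hfin : (∫⁻ w, erealToENNReal
        (-(phiDual (fun z => z ⬝ᵥ C.mulVec z) γ w)) ∂P₀) ≠ ⊤ := by
      refine ne_top_of_le_ne_top ?_ (lintegral_mono hbound)
      have heq : ∀ w : Fin d → ℝ, ENNReal.ofReal (K' * ∑ i, w i ^ 2)
          = ENNReal.ofReal K' * ENNReal.ofReal (∑ i, w i ^ 2) := fun w =>
        ENNReal.ofReal_mul hK'0
      rw [lintegral_congr heq, lintegral_const_mul' _ _ ENNReal.ofReal_ne_top]
      refine ENNReal.mul_ne_top ENNReal.ofReal_ne_top ?_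
      have hle : (∫⁻ w, ENNReal.ofReal (∑ i, w i ^ 2) ∂P₀)
          ≤ ∫⁻ w, (‖∑ i, w i ^ 2‖₊ : ℝ≥0∞) ∂P₀ :=
        lintegral_mono fun w => Real.ofReal_le_enorm _
      exact ne_top_of_le_ne_top hmom.2.ne hle
    rw [eexpE]
    exact sub_ne_bot_of_ne_top hfin
  have hbdd : BddBelow S := ⟨m, hlb⟩
  have hne : S.Nonempty := ⟨m + 1, hmem _ (by linarith)⟩
  refine le_antisymm ?_ (le_csInf hne hlb)
  refine le_of_forall_pos_le_add fun ε hε => ?_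
  exact csInf_le hbdd (hmem (m + ε) (by linarith))
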